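/- Let 0 < α < 1, T > 0, r ≥ 1, and n ≥ 3. For the graded mesh t_k = T(k/K)^r, the final-interval truncation term satisfies t_{n-1}^{α-4} τ_{n-1}^3 (t_n - t_{n-1})^{1-α} ≤ C n^{-(4-α)} for a constant C independent of n and K, where τ_{n-1} = t_{n-1} - t_{n-2}. -/

import Mathlib

open Real

private lemma rpow_sub_rpow_le_aux {x y r : ℝ} (hy : 0 ≤ y) (hxy : y ≤ x) (hr : 1 ≤ r) :
    x ^ r - y ^ r ≤ r * x ^ (r - 1) * (x - y) := by
  rcases eq_or_lt_of_le (hy.trans hxy) with hx0 | hx0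
  · have hx : x = 0 := hx0.symm
    have hy0 : y = 0 := le_antisymm (hxy.trans_eq hx) hy
    have hrpos : (0:ℝ) < r := lt_of_lt_of_le one_pos hr
    simp [hx, hy0, Real.zero_rpow hrpos.ne']
  · set s : ℝ := y / x - 1 with hs
    have hs1 : -1 ≤ s := by
      have : 0 ≤ y / x := div_nonneg hy hx0.le
      simp only [hs]; linarith
    have hb := one_add_mul_self_le_rpow_one_add hs1 hr
    have h1s : 1 + s = y / x := by simp [hs]
    rw [h1s, Real.div_rpow hy hx0.le] at hb
    have hxr : (0:ℝ) < x ^ r := Real.rpow_pos_of_pos hx0 r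
    have hb2 : (1 + r * s) * x ^ r ≤ y ^ r := (le_div_iff₀ hxr).mp hb
    have hxr1 : x ^ (r - 1) * x = x ^ r := by
      rw [← Real.rpow_add_one hx0.ne', sub_add_cancel]
    have hsx : s * x ^ r = y * x ^ (r - 1) - x ^ r := by
      rw [hs, ← hxr1]; field_simp
    have expand : (1 + r * s) * x ^ r = x ^ r + r * (y * x ^ (r - 1) - x ^ r) := by
      rw [add_mul, one_mul, mul_assoc, hsx]
    rw [expand] at hb2
    have hfin : r * x ^ (r - 1) * (x - y) = r * x ^ r - r * (y * x ^ (r - 1)) := by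
      rw [← hxr1]; ring
    linarith

private lemma combine_aux (α r : ℝ) {T23 rT N KR : ℝ} (h1 : 0 < T23) (h2 : 0 < rT)
    (h3 : 0 < N) (h4 : 0 < KR) :
    (T23 * (N / KR) ^ r) ^ (α - 4) * (rT * (N ^ (r - 1) / KR ^ r)) ^ (4 - α)
      = T23 ^ (α - 4) * rT ^ (4 - α) * N ^ (α - 4) := by
  have hNK : 0 < N / KR := div_pos h3 h4
  rw [Real.mul_rpow h1.le (Real.rpow_nonneg hNK.le r),
      Real.mul_rpow h2.le (by positivity),
      Real.div_rpow h3.le h4.le,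
      Real.div_rpow (Real.rpow_nonneg h3.le r) (Real.rpow_nonneg h4.le r),
      Real.div_rpow (Real.rpow_nonneg h3.le (r-1)) (Real.rpow_nonneg h4.le r),
      ← Real.rpow_mul h3.le, ← Real.rpow_mul h4.le,
      ← Real.rpow_mul h3.le, ← Real.rpow_mul h4.le]
  have e1 : N ^ (r * (α - 4)) * N ^ ((r - 1) * (4 - α)) = N ^ (α - 4) := by
    rw [← Real.rpow_add h3]; congr 1; ring
  have e2 : KR ^ (r * (α - 4)) * KR ^ (r * (4 - α)) = 1 := by
    rw [← Real.rpow_add h4]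
    have : r * (α - 4) + r * (4 - α) = 0 := by ring
    rw [this, Real.rpow_zero]
  calc T23 ^ (α - 4) * (N ^ (r * (α - 4)) / KR ^ (r * (α - 4))) *
        (rT ^ (4 - α) * (N ^ ((r - 1) * (4 - α)) / KR ^ (r * (4 - α))))
      = T23 ^ (α - 4) * rT ^ (4 - α) *
        ((N ^ (r * (α - 4)) * N ^ ((r - 1) * (4 - α))) /
          (KR ^ (r * (α - 4)) * KR ^ (r * (4 - α)))) := by ring
    _ = T23 ^ (α - 4) * rT ^ (4 - α) * N ^ (α - 4) := by rw [e1, e2, div_one]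

set_option maxHeartbeats 1000000 in
/-- For the graded mesh `t k = T (k/K)^r` with `0 < α < 1`, `T > 0`, `r ≥ 1`, and `3 ≤ n ≤ K`,
the final-interval truncation term satisfies
`t_{n-1}^{α-4} τ_{n-1}³ (t_n - t_{n-1})^{1-α} ≤ C n^{-(4-α)}`
with `C` independent of `n` and `K`. -/
theorem stmt_18 (α T r : ℝ) (hα : 0 < α ∧ α < 1) (hT : 0 < T) (hr : 1 ≤ r) :
    ∃ C : ℝ, 0 < C ∧ ∀ (K : ℕ) (t : ℕ → ℝ),
      (∀ k, t k = T * ((k : ℝ) / (K : ℝ)) ^ r) →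
      ∀ n : ℕ, 3 ≤ n → n ≤ K →
        (t (n - 1)) ^ (α - 4) * (t (n - 1) - t (n - 2)) ^ (3 : ℕ) *
            (t n - t (n - 1)) ^ (1 - α)
          ≤ C * (n : ℝ) ^ (-(4 - α)) := by
  obtain ⟨hα0, hα1⟩ := hα
  have hr0 : (0:ℝ) < r := lt_of_lt_of_le one_pos hr
  refine ⟨(T * (2/3 : ℝ) ^ r) ^ (α - 4) * (r * T) ^ (4 - α), by positivity, ?_⟩
  intro K t ht n hn3 hnK
  have hN3 : (3:ℝ) ≤ (n : ℝ) := by exact_mod_cast hn3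
  have hKR : (n : ℝ) ≤ (K : ℝ) := by exact_mod_cast hnK
  set N : ℝ := (n : ℝ) with hNdef
  set KR : ℝ := (K : ℝ) with hKRdef
  have hKR0 : (0:ℝ) < KR := by linarith
  have c1 : ((n - 1 : ℕ) : ℝ) = N - 1 := by
    rw [Nat.cast_sub (by omega), Nat.cast_one]
  have c2 : ((n - 2 : ℕ) : ℝ) = N - 2 := by
    rw [Nat.cast_sub (by omega)]; norm_num [hNdef]
  have e1 : t (n - 1) = T * ((N - 1) / KR) ^ r := by rw [ht, c1]
  have e2 : t (n - 2) = T * ((N - 2) / KR) ^ r := by rw [ht, c2]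
  have e3 : t n = T * (N / KR) ^ r := by rw [ht]
  rw [e1, e2, e3]
  set A : ℝ := (T * (2/3 : ℝ) ^ r) * (N / KR) ^ r with hAdef
  set B : ℝ := (r * T) * (N ^ (r - 1) / KR ^ r) with hBdef
  have hA0 : 0 < A := by
    have : (0:ℝ) < N / KR := div_pos (by linarith) hKR0
    positivity
  have hB0 : 0 < B := by
    have h1 : (0:ℝ) < N ^ (r - 1) := Real.rpow_pos_of_pos (by linarith) _
    have h2 : (0:ℝ) < KR ^ r := Real.rpow_pos_of_pos hKR0 _
    positivity
  -- bound 1 : A ≤ t (n-1)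
  have hAle : A ≤ T * ((N - 1) / KR) ^ r := by
    have h23 : (2/3 : ℝ) * (N / KR) ≤ (N - 1) / KR := by
      rw [mul_div_assoc']
      gcongr
      linarith
    have : ((2/3 : ℝ)) ^ r * (N / KR) ^ r ≤ ((N - 1) / KR) ^ r := by
      rw [← Real.mul_rpow (by norm_num) (by positivity)]
      exact Real.rpow_le_rpow (by positivity) h23 hr0.le
    calc A = T * ((2/3 : ℝ) ^ r * (N / KR) ^ r) := by rw [hAdef]; ring
      _ ≤ T * ((N - 1) / KR) ^ r := by
          exact mul_le_mul_of_nonneg_left this hT.le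
  have h1 : (T * ((N - 1) / KR) ^ r) ^ (α - 4) ≤ A ^ (α - 4) :=
    Real.rpow_le_rpow_of_nonpos hA0 hAle (by linarith)
  -- bound 2 : τ ≤ B
  have key2 : (N - 1) ^ r - (N - 2) ^ r ≤ r * N ^ (r - 1) := by
    have h := rpow_sub_rpow_le_aux (x := N - 1) (y := N - 2) (by linarith) (by linarith) hr
    have h2 : (N - 1) ^ (r - 1) ≤ N ^ (r - 1) :=
      Real.rpow_le_rpow (by linarith) (by linarith) (by linarith)
    have h3 : r * (N - 1) ^ (r - 1) * ((N - 1) - (N - 2)) = r * (N - 1) ^ (r - 1) := by ring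
    nlinarith
  have key3 : N ^ r - (N - 1) ^ r ≤ r * N ^ (r - 1) := by
    have h := rpow_sub_rpow_le_aux (x := N) (y := N - 1) (by linarith) (by linarith) hr
    nlinarith
  have hbB : T * ((N - 1) / KR) ^ r - T * ((N - 2) / KR) ^ r ≤ B := by
    rw [Real.div_rpow (by linarith) hKR0.le, Real.div_rpow (by linarith) hKR0.le, hBdef]
    have hK : (0:ℝ) < KR ^ r := Real.rpow_pos_of_pos hKR0 _
    have ee : T * ((N - 1) ^ r / KR ^ r) - T * ((N - 2) ^ r / KR ^ r)
        = T * ((N - 1) ^ r - (N - 2) ^ r) / KR ^ r := by ring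
    have ee2 : r * T * (N ^ (r - 1) / KR ^ r) = T * (r * N ^ (r - 1)) / KR ^ r := by ring
    rw [ee, ee2]
    gcongr
  have hcB : T * (N / KR) ^ r - T * ((N - 1) / KR) ^ r ≤ B := by
    rw [Real.div_rpow (by linarith) hKR0.le, Real.div_rpow (by linarith) hKR0.le, hBdef]
    have hK : (0:ℝ) < KR ^ r := Real.rpow_pos_of_pos hKR0 _
    have ee : T * (N ^ r / KR ^ r) - T * ((N - 1) ^ r / KR ^ r)
        = T * (N ^ r - (N - 1) ^ r) / KR ^ r := by ring
    have ee2 : r * T * (N ^ (r - 1) / KR ^ r) = T * (r * N ^ (r - 1)) / KR ^ r := by ring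
    rw [ee, ee2]
    gcongr
  have hb0 : 0 ≤ T * ((N - 1) / KR) ^ r - T * ((N - 2) / KR) ^ r := by
    have h : ((N - 2) / KR) ^ r ≤ ((N - 1) / KR) ^ r :=
      Real.rpow_le_rpow (div_nonneg (by linarith) hKR0.le) (by gcongr <;> linarith) hr0.le
    have := mul_le_mul_of_nonneg_left h hT.le
    linarith
  have hc0 : 0 ≤ T * (N / KR) ^ r - T * ((N - 1) / KR) ^ r := by
    have h : ((N - 1) / KR) ^ r ≤ (N / KR) ^ r :=
      Real.rpow_le_rpow (div_nonneg (by linarith) hKR0.le) (by gcongr <;> linarith) hr0.le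
    have := mul_le_mul_of_nonneg_left h hT.le
    linarith
  have h2 : (T * ((N - 1) / KR) ^ r - T * ((N - 2) / KR) ^ r) ^ (3:ℕ) ≤ B ^ (3:ℕ) :=
    pow_le_pow_left₀ hb0 hbB 3
  have h3 : (T * (N / KR) ^ r - T * ((N - 1) / KR) ^ r) ^ (1 - α) ≤ B ^ (1 - α) :=
    Real.rpow_le_rpow hc0 hcB (by linarith)
  have hchain :
      (T * ((N - 1) / KR) ^ r) ^ (α - 4) *
          (T * ((N - 1) / KR) ^ r - T * ((N - 2) / KR) ^ r) ^ (3:ℕ) *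
          (T * (N / KR) ^ r - T * ((N - 1) / KR) ^ r) ^ (1 - α)
        ≤ A ^ (α - 4) * B ^ (3:ℕ) * B ^ (1 - α) := by
    have hnn1 : 0 ≤ A ^ (α - 4) := Real.rpow_nonneg hA0.le _
    have hnn2 : 0 ≤ B ^ (3:ℕ) := pow_nonneg hB0.le _
    exact mul_le_mul (mul_le_mul h1 h2 (pow_nonneg hb0 3) hnn1)
      h3 (Real.rpow_nonneg hc0 _) (by positivity)
  refine hchain.trans ?_
  have hBB : B ^ (3:ℕ) * B ^ (1 - α) = B ^ (4 - α) := by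
    rw [← Real.rpow_natCast B 3, ← Real.rpow_add hB0]
    norm_num
    congr 1
    ring
  have hfinal : A ^ (α - 4) * B ^ (3:ℕ) * B ^ (1 - α)
      = (T * (2/3 : ℝ) ^ r) ^ (α - 4) * (r * T) ^ (4 - α) * N ^ (-(4 - α)) := by
    rw [mul_assoc, hBB, hAdef, hBdef,
      combine_aux α r (by positivity) (by positivity) (by linarith) hKR0]
    congr 1
    congr 1
    ring
  rw [hfinal]
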